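/- A topological field F is path connected if and only if for every nonempty compact Hausdorff topological space X, the Gelfand map I_F : X → Max(C(X,F)), x ↦ {f ∈ C(X,F) : f(x) = 0}, is a homeomorphism, where Max carries the Zariski topology. -/

import Mathlib

/-- The Zariski topology on the maximal spectrum, induced from the prime spectrum. -/
instance (R : Type*) [CommRing R] : TopologicalSpace (MaximalSpectrum R) :=
  TopologicalSpace.induced MaximalSpectrum.toPrimeSpectrum inferInstance

/-- Evaluation at a point as a ring homomorphism on the ring of continuous functions. -/
def evalHom (X F : Type*) [TopologicalSpace X] [TopologicalSpace F] [CommRing F]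
    [IsTopologicalRing F] (x : X) : C(X, F) →+* F where
  toFun f := f x
  map_one' := rfl
  map_mul' _ _ := rfl
  map_zero' := rfl
  map_add' _ _ := rfl

/-- The Gelfand map, sending a point to the maximal ideal of functions vanishing at it. -/
def gelfandMap (X F : Type*) [TopologicalSpace X] [Field F] [TopologicalSpace F]
    [IsTopologicalRing F] : X → MaximalSpectrum C(X, F) := fun x =>
  ⟨RingHom.ker (evalHom X F x),
    RingHom.ker_isMaximal_of_surjective _ fun a => ⟨ContinuousMap.const X a, rfl⟩⟩


/-!
A path `γ` from `0` to `1` in `F` turns a real Urysohn function `u` into `x ↦ γ (3 u x - 1)`,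
which is `0` near one closed set and `1` near the other. Such functions separate closed sets from
points, so the closed sets of `X` are exactly the common zero sets of families in `C(X, F)`: the
Gelfand map is an embedding. For surjectivity, a proper ideal without common zero would contain,
by compactness, finitely many `f₁, …, fₙ` without common zero. By induction on `n`, every `g`
vanishing near the common zeros of the `fᵢ` lies in the ideal they span: a Urysohn function `e`
splits `g = e g + (1 - e) g`, where `e g` vanishes near the zeros of `f₁`, so that `e g / f₁` is
continuous, and `(1 - e) g` vanishes near the common zeros of the others.
Conversely, injectivity for `X = [0, 1]` gives some `f : C([0, 1], F)` with `f 0 ≠ f 1`, and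
affine maps of `F` move this path onto a path from `0` to any prescribed point.
-/

open Set Filter Topology Function

theorem exists_continuousMap_eventually_eq_of_joined {X F : Type*} [TopologicalSpace X]
    [NormalSpace X] [TopologicalSpace F] {a b : F} (hab : Joined a b) {A B : Set X}
    (hA : IsClosed A) (hB : IsClosed B) (hAB : Disjoint A B) :
    ∃ e : C(X, F), (∀ᶠ x in 𝓝ˢ A, e x = a) ∧ ∀ᶠ x in 𝓝ˢ B, e x = b := by
  obtain ⟨u, hu0, hu1, -⟩ := exists_continuous_zero_one_of_isClosed hA hB hAB
  refine ⟨⟨fun x => hab.somePath.extend (3 * u x - 1), by fun_prop⟩, ?_, ?_⟩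
  · have hA' : {x | u x < 1 / 3} ∈ 𝓝ˢ A :=
      (isOpen_lt u.continuous continuous_const).mem_nhdsSet.2 fun x hx => by simp [hu0 hx]
    filter_upwards [hA'] with x hx
    exact hab.somePath.extend_of_le_zero (by linarith [show u x < 1 / 3 from hx])
  · have hB' : {x | 2 / 3 < u x} ∈ 𝓝ˢ B :=
      (isOpen_lt continuous_const u.continuous).mem_nhdsSet.2 fun x hx => by
        simp [hu1 hx]; norm_num
    filter_upwards [hB'] with x hx
    exact hab.somePath.extend_of_one_le (by linarith [show 2 / 3 < u x from hx])

namespace ContinuousMap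

variable {X F : Type*} [TopologicalSpace X]

theorem isClosed_setOf_forall_mem_apply_eq_zero [Zero F] [TopologicalSpace F] [T1Space F]
    (s : Set C(X, F)) : IsClosed {x | ∀ f ∈ s, f x = 0} := by
  simp only [ofPred_forall]
  exact isClosed_biInter fun f _ => isClosed_singleton.preimage f.continuous

variable [Field F] [TopologicalSpace F] [IsTopologicalDivisionRing F]

theorem dvd_of_eventually_nhdsSet_eq_zero {f g : C(X, F)}
    (hg : ∀ᶠ x in 𝓝ˢ {x | f x = 0}, g x = 0) : f ∣ g := by
  have hq : Continuous fun x => g x * (f x)⁻¹ := by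
    refine continuous_iff_continuousAt.2 fun x => ?_
    by_cases hfx : f x = 0
    · refine (continuousAt_const (y := (0 : F))).congr ?_
      filter_upwards [hg.filter_mono (nhds_le_nhdsSet (s := {x | f x = 0}) hfx)] with y hy
      simp [hy]
    · exact g.continuous.continuousAt.mul (f.continuous.continuousAt.inv₀ hfx)
  refine ⟨⟨_, hq⟩, ext fun x => ?_⟩
  change g x = f x * (g x * (f x)⁻¹)
  by_cases hfx : f x = 0
  · simp [hfx, hg.self_of_nhdsSet x hfx]
  · rw [mul_comm, inv_mul_cancel_right₀ hfx]

variable [T1Space F] [NormalSpace X]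

theorem mem_span_of_eventually_nhdsSet_eq_zero (hF : Joined (0 : F) 1) {s : Set C(X, F)}
    (hs : s.Finite) {g : C(X, F)} (hg : ∀ᶠ x in 𝓝ˢ {x | ∀ f ∈ s, f x = 0}, g x = 0) :
    g ∈ Ideal.span s := by
  induction s, hs using Set.Finite.induction_on generalizing g with
  | empty =>
    have : g = 0 := ext fun x => hg.self_of_nhdsSet x fun _ h => h.elim
    simp [this]
  | @insert f s _ _ ih =>
    obtain ⟨V, hV, hZV, hgV⟩ := eventually_nhdsSet_iff_exists.1 hg
    have hgV' : ∀ᶠ x in 𝓝ˢ V, g x = 0 := mem_of_superset hV.mem_nhdsSet_self hgV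
    obtain ⟨e, he0, he1⟩ := exists_continuousMap_eventually_eq_of_joined hF
      ((isClosed_singleton.preimage f.continuous).sdiff hV)
      ((isClosed_setOf_forall_mem_apply_eq_zero s).sdiff hV)
      (disjoint_left.2 fun x hxf hxs => hxf.2 (hZV (forall_mem_insert.2 ⟨hxf.1, hxs.1⟩)))
    have hf : f ∣ e * g := dvd_of_eventually_nhdsSet_eq_zero <|
      ((he0.mono fun x hx => by simp [hx]).union (hgV'.mono fun x hx => by simp [hx])).filter_mono
        (nhdsSet_mono (subset_sdiff_union _ V))
    have hs : (1 - e) * g ∈ Ideal.span s := ih <|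
      ((he1.mono fun x hx => by simp [hx]).union (hgV'.mono fun x hx => by simp [hx])).filter_mono
        (nhdsSet_mono (subset_sdiff_union _ V))
    rw [Ideal.span_insert]
    exact Submodule.mem_sup.2 ⟨e * g, Ideal.mem_span_singleton.2 hf, _, hs, by ring⟩

theorem exists_forall_mem_apply_eq_zero [CompactSpace X] (hF : Joined (0 : F) 1)
    {I : Ideal C(X, F)} (hI : I ≠ ⊤) : ∃ x, ∀ f ∈ I, f x = 0 := by
  by_contra! h
  obtain ⟨s, hsI, hs, hcover⟩ := isCompact_univ.elim_finite_subcover_image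
    (b := (I : Set C(X, F))) (c := fun f => {x | f x ≠ 0})
    (fun f _ => (isClosed_singleton.preimage f.continuous).isOpen_compl)
    (fun x _ => by simpa using h x)
  have hZ : {x | ∀ f ∈ s, f x = 0} = ∅ :=
    eq_empty_of_forall_notMem fun x hx => by
      obtain ⟨f, hf, hfx⟩ : ∃ f ∈ s, f x ≠ 0 := by simpa using hcover (mem_univ x)
      exact hfx (hx f hf)
  have hone : (1 : C(X, F)) ∈ Ideal.span s :=
    mem_span_of_eventually_nhdsSet_eq_zero hF hs (by simp [hZ])
  exact hI ((Ideal.eq_top_iff_one _).2 (Ideal.span_le.2 hsI hone))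

end ContinuousMap

section Gelfand

variable {X F : Type*} [TopologicalSpace X] [Field F] [TopologicalSpace F]
  [IsTopologicalDivisionRing F]

@[simp]
theorem mem_gelfandMap_asIdeal {x : X} {f : C(X, F)} :
    f ∈ (gelfandMap X F x).asIdeal ↔ f x = 0 :=
  Iff.rfl

theorem preimage_gelfandMap_zeroLocus (s : Set C(X, F)) :
    gelfandMap X F ⁻¹' (MaximalSpectrum.toPrimeSpectrum ⁻¹' PrimeSpectrum.zeroLocus s) =
      {x | ∀ f ∈ s, f x = 0} := by
  ext x
  simp [PrimeSpectrum.mem_zeroLocus, subset_def, MaximalSpectrum.toPrimeSpectrum]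

theorem exists_apply_ne_of_gelfandMap_ne {x y : X} (h : gelfandMap X F x ≠ gelfandMap X F y) :
    ∃ f : C(X, F), f x ≠ f y := by
  by_contra! hf
  exact h (MaximalSpectrum.ext (Ideal.ext fun f => by simp [hf f]))

theorem preimage_gelfandMap_zeroLocus_of_isClosed [NormalSpace X] [T1Space X]
    (hF : Joined (0 : F) 1) {C : Set X} (hC : IsClosed C) :
    gelfandMap X F ⁻¹' (MaximalSpectrum.toPrimeSpectrum ⁻¹'
      PrimeSpectrum.zeroLocus {f | ∀ x ∈ C, f x = 0}) = C := by
  rw [preimage_gelfandMap_zeroLocus]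
  refine Subset.antisymm (fun x hx => ?_) fun x hx f hf => hf x hx
  by_contra hxC
  obtain ⟨e, he0, he1⟩ := exists_continuousMap_eventually_eq_of_joined hF hC isClosed_singleton
    (disjoint_singleton_right.2 hxC)
  exact one_ne_zero ((he1.self_of_nhdsSet x rfl).symm.trans
    (hx e fun y hy => he0.self_of_nhdsSet y hy))

variable [T1Space F]

theorem continuous_gelfandMap : Continuous (gelfandMap X F) := by
  refine continuous_induced_rng.2 (continuous_iff_isClosed.2 fun Z hZ => ?_)
  obtain ⟨s, rfl⟩ := (PrimeSpectrum.isClosed_iff_zeroLocus Z).1 hZ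
  have := ContinuousMap.isClosed_setOf_forall_mem_apply_eq_zero s
  rwa [← preimage_gelfandMap_zeroLocus] at this

variable [NormalSpace X]

theorem isInducing_gelfandMap [T1Space X] (hF : Joined (0 : F) 1) :
    IsInducing (gelfandMap X F) := by
  refine ⟨TopologicalSpace.ext_isClosed fun C => ⟨fun hC => ?_, fun hC => ?_⟩⟩
  · exact isClosed_induced_iff.2 ⟨_, (PrimeSpectrum.isClosed_zeroLocus _).preimage
      continuous_induced_dom, preimage_gelfandMap_zeroLocus_of_isClosed hF hC⟩
  · obtain ⟨Z, hZ, rfl⟩ := isClosed_induced_iff.1 hC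
    exact hZ.preimage continuous_gelfandMap

theorem gelfandMap_surjective [CompactSpace X] (hF : Joined (0 : F) 1) :
    Surjective (gelfandMap X F) := fun m => by
  obtain ⟨x, hx⟩ := ContinuousMap.exists_forall_mem_apply_eq_zero hF m.isMaximal.ne_top
  exact ⟨x, MaximalSpectrum.ext
    (m.isMaximal.eq_of_le (gelfandMap X F x).isMaximal.ne_top hx).symm⟩

end Gelfand

theorem isHomeomorph_gelfandMap {X F : Type*} [TopologicalSpace X] [CompactSpace X] [T2Space X]
    [Field F] [TopologicalSpace F] [IsTopologicalDivisionRing F] [T1Space F]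
    (hF : Joined (0 : F) 1) : IsHomeomorph (gelfandMap X F) :=
  isHomeomorph_iff_isEmbedding_surjective.2
    ⟨(isInducing_gelfandMap hF).isEmbedding, gelfandMap_surjective hF⟩

theorem pathConnectedSpace_of_joined {F : Type*} [DivisionRing F] [TopologicalSpace F]
    [IsTopologicalRing F] {a b : F} (hab : a ≠ b) (h : Joined a b) : PathConnectedSpace F := by
  have hjoined (y : F) : Joined 0 y := by
    simpa [sub_ne_zero.2 hab.symm] using
      h.map (f := fun t => (t - a) * ((b - a)⁻¹ * y)) (by fun_prop)
  exact ⟨⟨0⟩, fun x y => (hjoined x).symm.trans (hjoined y)⟩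

theorem stmt_18 (F : Type) [Field F] [TopologicalSpace F] [IsTopologicalDivisionRing F]
    [T1Space F] :
    PathConnectedSpace F ↔
      ∀ (X : Type) [TopologicalSpace X] [CompactSpace X] [T2Space X] [Nonempty X],
        IsHomeomorph (gelfandMap X F) := by
  refine ⟨fun _ X _ _ _ _ => isHomeomorph_gelfandMap (PathConnectedSpace.joined 0 1),
    fun h => ?_⟩
  obtain ⟨f, hf⟩ := exists_apply_ne_of_gelfandMap_ne ((h unitInterval).injective.ne
    (zero_ne_one : (0 : unitInterval) ≠ 1))
  exact pathConnectedSpace_of_joined hf ⟨⟨f, rfl, rfl⟩⟩
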